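/- arXiv:2503.05348 — 7 statements merged into one kernel-verified Lean document; each statement's English description precedes it below -/
import Mathlib

section
/- Let C be a copula with continuous partial derivative ∂₂C in v. If ∂₂C(u,v) ≥ ∂₂C(u,1-v) for all u ∈ (0,1) and v ∈ (0,1/2) (the sPQD property), then C(u,v) + C(u,1-v) ≥ u for all u,v ∈ [0,1] (the wPQD property). -/
open MeasureTheory Set

structure IsCopula (C : ℝ → ℝ → ℝ) : Prop where
  grounded_fst : ∀ v ∈ Icc (0:ℝ) 1, C 0 v = 0
  grounded_snd : ∀ u ∈ Icc (0:ℝ) 1, C u 0 = 0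
  margin_fst : ∀ u ∈ Icc (0:ℝ) 1, C u 1 = u
  margin_snd : ∀ v ∈ Icc (0:ℝ) 1, C 1 v = v
  twoIncreasing : ∀ u₁ u₂ v₁ v₂ : ℝ, u₁ ∈ Icc (0:ℝ) 1 → u₂ ∈ Icc (0:ℝ) 1 →
    v₁ ∈ Icc (0:ℝ) 1 → v₂ ∈ Icc (0:ℝ) 1 → u₁ ≤ u₂ → v₁ ≤ v₂ →
    C u₁ v₂ + C u₂ v₁ ≤ C u₁ v₁ + C u₂ v₂

/-!
For fixed `u`, the function `φ(v) = C(u,v) + C(u,1-v)` is symmetric about `1/2` and equals `u`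
at `v = 0`. Its derivative `∂₂C(u,v) - ∂₂C(u,1-v)` is nonnegative on `(0,1/2)` by sPQD, so `φ`
increases on `[0,1/2]`; by symmetry its minimum over `[0,1]` is `φ(0) = u`.
The edges `u = 0` and `u = 1`, where no derivative is assumed, follow from the margins.
-/

/-- The paper's `φ(u, ·)` is `reflSum (C u)`. -/
def reflSum (g : ℝ → ℝ) (v : ℝ) : ℝ := g v + g (1 - v)

lemma reflSum_one_sub (g : ℝ → ℝ) (v : ℝ) : reflSum g (1 - v) = reflSum g v := by
  simp only [reflSum, sub_sub_cancel, add_comm]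

lemma hasDerivAt_reflSum {g : ℝ → ℝ} {a b x : ℝ} (ha : HasDerivAt g a x)
    (hb : HasDerivAt g b (1 - x)) : HasDerivAt (reflSum g) (a - b) x := by
  have hrefl : HasDerivAt (fun y : ℝ => g (1 - y)) (b * -1) x :=
    hb.comp x ((hasDerivAt_id x).const_sub 1)
  exact (ha.add hrefl).congr_deriv (by ring)

lemma continuousOn_reflSum {g : ℝ → ℝ} (hg : ContinuousOn g (Icc 0 1)) :
    ContinuousOn (reflSum g) (Icc 0 1) :=
  hg.add <| hg.comp (continuous_const.sub continuous_id).continuousOn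
    fun _ hx => ⟨sub_nonneg.2 hx.2, sub_le_self _ hx.1⟩

lemma monotoneOn_reflSum {g g' : ℝ → ℝ} (hg : ContinuousOn g (Icc 0 1))
    (hderiv : ∀ x ∈ Ioo (0:ℝ) 1, HasDerivAt g (g' x) x)
    (hle : ∀ x ∈ Ioo (0:ℝ) (1/2), g' (1 - x) ≤ g' x) :
    MonotoneOn (reflSum g) (Icc 0 (1/2)) := by
  have hφ' : ∀ x ∈ Ioo (0:ℝ) (1/2), HasDerivAt (reflSum g) (g' x - g' (1 - x)) x :=
    fun x hx => hasDerivAt_reflSum (hderiv x ⟨hx.1, by linarith [hx.2]⟩)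
      (hderiv (1 - x) ⟨by linarith [hx.2], by linarith [hx.1]⟩)
  refine monotoneOn_of_deriv_nonneg (convex_Icc 0 (1/2))
    ((continuousOn_reflSum hg).mono (Icc_subset_Icc le_rfl (by norm_num))) ?_ ?_
  · rw [interior_Icc]
    exact fun x hx => (hφ' x hx).differentiableAt.differentiableWithinAt
  · rw [interior_Icc]
    intro x hx
    rw [(hφ' x hx).deriv, sub_nonneg]
    exact hle x hx

lemma reflSum_zero_le {g : ℝ → ℝ} (hmono : MonotoneOn (reflSum g) (Icc 0 (1/2))) {v : ℝ}
    (hv : v ∈ Icc (0:ℝ) 1) : reflSum g 0 ≤ reflSum g v := by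
  have h0 : (0:ℝ) ∈ Icc 0 (1/2) := left_mem_Icc.2 (by norm_num)
  rcases le_total v (1/2) with hv2 | hv2
  · exact hmono h0 ⟨hv.1, hv2⟩ hv.1
  · rw [← reflSum_one_sub g v]
    exact hmono h0 ⟨sub_nonneg.2 hv.2, by linarith⟩ (sub_nonneg.2 hv.2)

lemma IsCopula.reflSum_zero {C : ℝ → ℝ → ℝ} (hC : IsCopula C) {u : ℝ} (hu : u ∈ Icc (0:ℝ) 1) :
    reflSum (C u) 0 = u := by
  rw [reflSum, sub_zero, hC.grounded_snd u hu, hC.margin_fst u hu, zero_add]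

theorem stmt5_general (C : ℝ → ℝ → ℝ) (hC : IsCopula C)
    (D : ℝ → ℝ → ℝ)
    (hcont : ∀ u ∈ Icc (0:ℝ) 1, ContinuousOn (C u) (Icc (0:ℝ) 1))
    (hderiv : ∀ u ∈ Ioo (0:ℝ) 1, ∀ v ∈ Ioo (0:ℝ) 1, HasDerivAt (C u) (D u v) v)
    (hsPQD : ∀ u ∈ Ioo (0:ℝ) 1, ∀ v ∈ Ioo (0:ℝ) (1/2), D u (1 - v) ≤ D u v) :
    ∀ u ∈ Icc (0:ℝ) 1, ∀ v ∈ Icc (0:ℝ) 1, u ≤ C u v + C u (1 - v) := by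
  intro u hu v hv
  have h1v : 1 - v ∈ Icc (0:ℝ) 1 := ⟨sub_nonneg.2 hv.2, sub_le_self _ hv.1⟩
  rcases hu.1.eq_or_lt with rfl | hu0
  · rw [hC.grounded_fst v hv, hC.grounded_fst _ h1v, add_zero]
  rcases hu.2.eq_or_lt with rfl | hu1
  · rw [hC.margin_snd v hv, hC.margin_snd _ h1v, add_sub_cancel]
  have hmono := monotoneOn_reflSum (hcont u hu) (hderiv u ⟨hu0, hu1⟩) (hsPQD u ⟨hu0, hu1⟩)
  calc u = reflSum (C u) 0 := (hC.reflSum_zero hu).symm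
    _ ≤ reflSum (C u) v := reflSum_zero_le hmono hv

/-- If the partial derivative `∂₂C` of a copula `C` (continuous in `v`) satisfies
`∂₂C(u,v) ≥ ∂₂C(u,1-v)` for `u ∈ (0,1)`, `v ∈ (0,1/2)` (sPQD), then
`C(u,v) + C(u,1-v) ≥ u` on `[0,1]²` (wPQD). -/
theorem stmt5 (C : ℝ → ℝ → ℝ) (hC : IsCopula C)
    (D : ℝ → ℝ → ℝ)
    (hcont : ∀ u ∈ Icc (0:ℝ) 1, ContinuousOn (C u) (Icc (0:ℝ) 1))
    (hderiv : ∀ u ∈ Ioo (0:ℝ) 1, ∀ v ∈ Ioo (0:ℝ) 1, HasDerivAt (C u) (D u v) v)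
    (hDcont : ∀ u ∈ Ioo (0:ℝ) 1, ContinuousOn (D u) (Ioo (0:ℝ) 1))
    (hsPQD : ∀ u ∈ Ioo (0:ℝ) 1, ∀ v ∈ Ioo (0:ℝ) (1/2), D u (1 - v) ≤ D u v) :
    ∀ u ∈ Icc (0:ℝ) 1, ∀ v ∈ Icc (0:ℝ) 1, u ≤ C u v + C u (1 - v) :=
  stmt5_general C hC D hcont hderiv hsPQD
end

section
/- Let C be an absolutely continuous copula whose partial derivative ∂₂C exists for all u ∈ (0,1), v ∈ (0,1). Then the following are equivalent: (i) C(u,v) + C(u,1-v) = u for all u,v ∈ [0,1]; (ii) ∂₂C(u,v) = ∂₂C(u,1-v) for all u ∈ (0,1) and v ∈ (0,1/2). -/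
open MeasureTheory Set

/-! The reflected sum `g(v) = C(u,v) + C(u,1-v)` has derivative `∂₂C(u,v) - ∂₂C(u,1-v)` on
`(0,1)` and equals `u` at `v = 0`. So (i), i.e. `g ≡ u`, forces the derivative to vanish, and
conversely a vanishing derivative makes the continuous function `g` constant on `[0,1]` by the
mean value theorem. Symmetry about `1/2` reduces the derivative condition to `v < 1/2`. -/

theorem HasDerivAt.add_comp_one_sub {f : ℝ → ℝ} {a b x : ℝ} (hx : HasDerivAt f a x)
    (h1x : HasDerivAt f b (1 - x)) : HasDerivAt (fun w => f w + f (1 - w)) (a - b) x := by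
  have h := hx.add (h1x.comp x ((hasDerivAt_id x).const_sub 1))
  rw [mul_neg_one, ← sub_eq_add_neg] at h
  exact h

theorem eq_of_hasDerivAt_zero_of_mem_Icc {g : ℝ → ℝ} {a b x y : ℝ}
    (hg : ContinuousOn g (Icc a b)) (hd : ∀ z ∈ Ioo a b, HasDerivAt g 0 z)
    (hx : x ∈ Icc a b) (hy : y ∈ Icc a b) : g x = g y := by
  wlog hxy : x ≤ y generalizing x y
  · exact (this hy hx (le_of_not_ge hxy)).symm
  rcases hxy.eq_or_lt with rfl | hxy
  · rfl
  obtain ⟨c, -, hslope⟩ := exists_hasDerivAt_eq_slope g (fun _ => 0) hxy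
    (hg.mono (Icc_subset_Icc hx.1 hy.2))
    (fun z hz => hd z ⟨hx.1.trans_lt hz.1, hz.2.trans_le hy.2⟩)
  rw [eq_comm, div_eq_zero_iff, sub_eq_zero, sub_eq_zero] at hslope
  exact hslope.resolve_right hxy.ne' |>.symm

theorem forall_eq_one_sub_of_forall_lt_half {φ : ℝ → ℝ}
    (h : ∀ v ∈ Ioo (0:ℝ) (1/2), φ v = φ (1 - v)) : ∀ v ∈ Ioo (0:ℝ) 1, φ v = φ (1 - v) := by
  intro v hv
  rcases lt_trichotomy v (1/2) with hlt | rfl | hgt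
  · exact h v ⟨hv.1, hlt⟩
  · norm_num
  · simpa using (h (1 - v) ⟨by linarith [hv.2], by linarith⟩).symm

theorem add_comp_one_sub_eq_iff {f f' : ℝ → ℝ} {c : ℝ} (hf : ContinuousOn f (Icc 0 1))
    (hd : ∀ v ∈ Ioo (0:ℝ) 1, HasDerivAt f (f' v) v) (hc : f 0 + f 1 = c) :
    (∀ v ∈ Icc (0:ℝ) 1, f v + f (1 - v) = c) ↔ ∀ v ∈ Ioo (0:ℝ) (1/2), f' v = f' (1 - v) := by
  set g : ℝ → ℝ := fun w => f w + f (1 - w)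
  have hg' : ∀ v ∈ Ioo (0:ℝ) 1, HasDerivAt g (f' v - f' (1 - v)) v := fun v hv =>
    (hd v hv).add_comp_one_sub (hd (1 - v) (Ioo.one_sub_mem hv))
  constructor
  · intro h v hv
    have hv1 : v ∈ Ioo (0:ℝ) 1 := ⟨hv.1, by linarith [hv.2]⟩
    have hconst : g =ᶠ[nhds v] fun _ => c :=
      Filter.eventually_of_mem (Ioo_mem_nhds hv1.1 hv1.2) fun w hw => h w (Ioo_subset_Icc_self hw)
    exact sub_eq_zero.mp <| (hg' v hv1).unique <| (hasDerivAt_const v c).congr_of_eventuallyEq hconst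
  · intro h v hv
    have hsymm := forall_eq_one_sub_of_forall_lt_half h
    have hg0 : ∀ z ∈ Ioo (0:ℝ) 1, HasDerivAt g 0 z := fun z hz => by
      simpa [hsymm z hz] using hg' z hz
    have hgc : ContinuousOn g (Icc 0 1) :=
      hf.add (hf.comp (continuous_const.sub continuous_id).continuousOn fun _ => Icc.one_sub_mem)
    calc g v = g 0 := eq_of_hasDerivAt_zero_of_mem_Icc hgc hg0 hv ⟨le_rfl, zero_le_one⟩
      _ = c := by simpa [g] using hc

theorem IsCopula.forall_add_apply_one_sub_iff {C : ℝ → ℝ → ℝ} (hC : IsCopula C) :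
    (∀ u ∈ Icc (0:ℝ) 1, ∀ v ∈ Icc (0:ℝ) 1, C u v + C u (1 - v) = u) ↔
    ∀ u ∈ Ioo (0:ℝ) 1, ∀ v ∈ Icc (0:ℝ) 1, C u v + C u (1 - v) = u := by
  refine ⟨fun h u hu => h u (Ioo_subset_Icc_self hu), fun h u hu v hv => ?_⟩
  rcases eq_endpoints_or_mem_Ioo_of_mem_Icc hu with rfl | rfl | hu
  · rw [hC.grounded_fst v hv, hC.grounded_fst _ (Icc.one_sub_mem hv), add_zero]
  · rw [hC.margin_snd v hv, hC.margin_snd _ (Icc.one_sub_mem hv), add_sub_cancel]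
  · exact h u hu v hv

/-- For an absolutely continuous copula `C` with partial derivative `∂₂C = D` on the
open unit square, `C(u,v) + C(u,1-v) = u` on `[0,1]²` iff
`∂₂C(u,v) = ∂₂C(u,1-v)` for all `u ∈ (0,1)`, `v ∈ (0,1/2)`. -/
theorem stmt6 (C : ℝ → ℝ → ℝ) (hC : IsCopula C)
    (D : ℝ → ℝ → ℝ)
    (hcont : ∀ u ∈ Icc (0:ℝ) 1, ContinuousOn (C u) (Icc (0:ℝ) 1))
    (hderiv : ∀ u ∈ Ioo (0:ℝ) 1, ∀ v ∈ Ioo (0:ℝ) 1, HasDerivAt (C u) (D u v) v) :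
    (∀ u ∈ Icc (0:ℝ) 1, ∀ v ∈ Icc (0:ℝ) 1, C u v + C u (1 - v) = u) ↔
    (∀ u ∈ Ioo (0:ℝ) 1, ∀ v ∈ Ioo (0:ℝ) (1/2), D u v = D u (1 - v)) := by
  rw [hC.forall_add_apply_one_sub_iff]
  refine forall₂_congr fun u hu => add_comp_one_sub_eq_iff (hcont u (Ioo_subset_Icc_self hu))
    (hderiv u hu) ?_
  have hu' := Ioo_subset_Icc_self hu
  rw [hC.grounded_snd u hu', hC.margin_fst u hu', zero_add]
end

section
/- Let C be a copula and (U,V) a pair of random variables with joint CDF C (so U, V are uniform on [0,1]). Define the Spearman rho ρ_C = 12·E(UV) - 3 and the generalized Gini measure δ_C = 6·∫₀¹∫₀¹ [C(u,v) + C(u,1-v) - u] dv du. Then δ_C = ρ_C. -/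
open MeasureTheory Set

lemma key_aux {Ω : Type*} [MeasurableSpace Ω] (μ : Measure Ω) [IsProbabilityMeasure μ]
    (X Y : Ω → ℝ) (hX : Measurable X) (hY : Measurable Y)
    (hX01 : ∀ᵐ ω ∂μ, X ω ∈ Icc (0:ℝ) 1) (hY01 : ∀ᵐ ω ∂μ, Y ω ∈ Icc (0:ℝ) 1) :
    ∫ u in (0:ℝ)..1, ∫ v in (0:ℝ)..1, (μ {ω | X ω ≤ u ∧ Y ω ≤ v}).toReal
      = ∫ ω, (1 - X ω) * (1 - Y ω) ∂μ := by
  set ν := volume.restrict (Ioc (0:ℝ) 1) with hν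
  set S : Set ((ℝ × ℝ) × Ω) := {q | X q.2 ≤ q.1.1 ∧ Y q.2 ≤ q.1.2} with hSdef
  have hS : MeasurableSet S :=
    (measurableSet_le (hX.comp measurable_snd) measurable_fst.fst).inter
      (measurableSet_le (hY.comp measurable_snd) measurable_fst.snd)
  have hmeas : Measurable fun p : ℝ × ℝ => μ (Prod.mk p ⁻¹' S) :=
    measurable_measure_prodMk_left hS
  have hmXY : AEStronglyMeasurable (fun ω => (1 - X ω) * (1 - Y ω)) μ :=
    (((measurable_const.sub hX).mul (measurable_const.sub hY))).aestronglyMeasurable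
  have hbound : ∀ᵐ ω ∂μ, ‖(1 - X ω) * (1 - Y ω)‖ ≤ 1 := by
    filter_upwards [hX01, hY01] with ω hx hy
    rw [Real.norm_eq_abs, abs_mul]
    have h1 : |1 - X ω| ≤ 1 := by rw [abs_le]; constructor <;> [linarith [hx.2]; linarith [hx.1]]
    have h2 : |1 - Y ω| ≤ 1 := by rw [abs_le]; constructor <;> [linarith [hy.2]; linarith [hy.1]]
    calc |1 - X ω| * |1 - Y ω| ≤ 1 * 1 := mul_le_mul h1 h2 (abs_nonneg _) zero_le_one
      _ = 1 := by ring
  have hintXY : Integrable (fun ω => (1 - X ω) * (1 - Y ω)) μ :=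
    Integrable.mono' (integrable_const 1) hmXY hbound
  have hnnXY : 0 ≤ᵐ[μ] fun ω => (1 - X ω) * (1 - Y ω) := by
    filter_upwards [hX01, hY01] with ω hx hy
    exact mul_nonneg (by linarith [hx.2]) (by linarith [hy.2])
  have h1 : ∀ u : ℝ, ∫ v in (0:ℝ)..1, (μ {ω | X ω ≤ u ∧ Y ω ≤ v}).toReal
      = (∫⁻ v, μ (Prod.mk ((u, v) : ℝ × ℝ) ⁻¹' S) ∂ν).toReal := by
    intro u
    rw [intervalIntegral.integral_of_le zero_le_one]
    exact integral_toReal ((hmeas.comp measurable_prodMk_left).aemeasurable)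
      (Filter.Eventually.of_forall fun v => measure_lt_top μ _)
  have hmeas2 : Measurable fun u : ℝ => ∫⁻ v, μ (Prod.mk ((u, v) : ℝ × ℝ) ⁻¹' S) ∂ν :=
    hmeas.lintegral_prod_right'
  have h2 : ∫ u in (0:ℝ)..1, (∫⁻ v, μ (Prod.mk ((u, v) : ℝ × ℝ) ⁻¹' S) ∂ν).toReal
      = (∫⁻ u, ∫⁻ v, μ (Prod.mk ((u, v) : ℝ × ℝ) ⁻¹' S) ∂ν ∂ν).toReal := by
    rw [intervalIntegral.integral_of_le zero_le_one]
    refine integral_toReal hmeas2.aemeasurable (Filter.Eventually.of_forall fun u => ?_)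
    calc ∫⁻ v, μ (Prod.mk ((u, v) : ℝ × ℝ) ⁻¹' S) ∂ν ≤ ∫⁻ _, 1 ∂ν :=
          lintegral_mono fun v => prob_le_one
      _ = ν univ := lintegral_one
      _ = volume (Ioc (0:ℝ) 1) := by rw [hν, Measure.restrict_apply_univ]
      _ < ⊤ := by rw [Real.volume_Ioc]; exact ENNReal.ofReal_lt_top
  have h3 : ∫⁻ u, ∫⁻ v, μ (Prod.mk ((u, v) : ℝ × ℝ) ⁻¹' S) ∂ν ∂ν
      = ((ν.prod ν).prod μ) S := by
    rw [Measure.prod_apply hS, lintegral_prod _ hmeas.aemeasurable]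
  have h5 : ((ν.prod ν).prod μ) S = ∫⁻ ω, (ν.prod ν) ((fun p : ℝ × ℝ => (p, ω)) ⁻¹' S) ∂μ :=
    Measure.prod_apply_symm hS
  have hIci : ∀ a : ℝ, a ∈ Icc (0:ℝ) 1 → ν (Ici a) = ENNReal.ofReal (1 - a) := by
    intro a ha
    rw [hν, Measure.restrict_apply measurableSet_Ici]
    refine le_antisymm ?_ ?_
    · calc volume (Ici a ∩ Ioc 0 1) ≤ volume (Icc a 1) :=
            measure_mono fun x hx => ⟨hx.1, hx.2.2⟩
        _ = ENNReal.ofReal (1 - a) := Real.volume_Icc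
    · calc ENNReal.ofReal (1 - a) = volume (Ioc a 1) := Real.volume_Ioc.symm
        _ ≤ volume (Ici a ∩ Ioc 0 1) :=
            measure_mono fun x hx => ⟨le_of_lt hx.1, lt_of_le_of_lt ha.1 hx.1, hx.2⟩
  have h6 : ∫⁻ ω, (ν.prod ν) ((fun p : ℝ × ℝ => (p, ω)) ⁻¹' S) ∂μ
      = ∫⁻ ω, ENNReal.ofReal ((1 - X ω) * (1 - Y ω)) ∂μ := by
    refine lintegral_congr_ae ?_
    filter_upwards [hX01, hY01] with ω hx hy
    have hpre : (fun p : ℝ × ℝ => (p, ω)) ⁻¹' S = Ici (X ω) ×ˢ Ici (Y ω) := rfl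
    rw [hpre, Measure.prod_prod, hIci _ hx, hIci _ hy,
      ← ENNReal.ofReal_mul (by linarith [hx.2])]
  have h7 : ∫⁻ ω, ENNReal.ofReal ((1 - X ω) * (1 - Y ω)) ∂μ
      = ENNReal.ofReal (∫ ω, (1 - X ω) * (1 - Y ω) ∂μ) :=
    (ofReal_integral_eq_lintegral_ofReal hintXY hnnXY).symm
  calc ∫ u in (0:ℝ)..1, ∫ v in (0:ℝ)..1, (μ {ω | X ω ≤ u ∧ Y ω ≤ v}).toReal
      = ∫ u in (0:ℝ)..1, (∫⁻ v, μ (Prod.mk ((u, v) : ℝ × ℝ) ⁻¹' S) ∂ν).toReal :=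
        intervalIntegral.integral_congr fun u _ => h1 u
    _ = (∫⁻ u, ∫⁻ v, μ (Prod.mk ((u, v) : ℝ × ℝ) ⁻¹' S) ∂ν ∂ν).toReal := h2
    _ = (ENNReal.ofReal (∫ ω, (1 - X ω) * (1 - Y ω) ∂μ)).toReal := by rw [h3, h5, h6, h7]
    _ = ∫ ω, (1 - X ω) * (1 - Y ω) ∂μ :=
        ENNReal.toReal_ofReal (integral_nonneg_of_ae hnnXY)

lemma mem01_ae {Ω : Type*} [MeasurableSpace Ω] (μ : Measure Ω) [IsProbabilityMeasure μ]
    (X : Ω → ℝ) (hX : Measurable X)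
    (h0 : (μ {ω | X ω ≤ 0}).toReal = 0) (h1 : (μ {ω | X ω ≤ 1}).toReal = 1) :
    ∀ᵐ ω ∂μ, X ω ∈ Icc (0:ℝ) 1 := by
  have hm : MeasurableSet {ω | X ω ≤ 1} := measurableSet_le hX measurable_const
  have hμ1 : μ {ω | X ω ≤ 1} = 1 := by
    rw [← ENNReal.ofReal_toReal (measure_ne_top μ {ω | X ω ≤ 1}), h1, ENNReal.ofReal_one]
  have hμ0 : μ {ω | X ω ≤ 0} = 0 := by
    rcases (ENNReal.toReal_eq_zero_iff _).mp h0 with h | h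
    · exact h
    · exact absurd h (measure_ne_top μ _)
  have hc : μ {ω | X ω ≤ 1}ᶜ = 0 := by
    rw [measure_compl hm (measure_ne_top μ _), hμ1, measure_univ, tsub_self]
  rw [ae_iff]
  refine measure_mono_null ?_ (measure_union_null hμ0 hc)
  intro ω hω
  simp only [mem_setOf_eq, Set.mem_Icc, not_and_or, not_le] at hω
  rcases hω with h | h
  · exact Or.inl (le_of_lt h)
  · exact Or.inr (by simp only [mem_compl_iff, mem_setOf_eq, not_le]; exact h)

/-- The generalized Gini measure `δ_C = 6∫∫ [C(u,v)+C(u,1-v)-u] dv du` equals the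
Spearman rho `ρ_C = 12·E(UV) - 3` of a vector `(U,V)` with joint CDF `C`. -/
theorem stmt7 {Ω : Type*} [MeasurableSpace Ω] (μ : Measure Ω) [IsProbabilityMeasure μ]
    (C : ℝ → ℝ → ℝ) (hC : IsCopula C) (U V : Ω → ℝ)
    (hU : Measurable U) (hV : Measurable V)
    (hjoint : ∀ u ∈ Icc (0:ℝ) 1, ∀ v ∈ Icc (0:ℝ) 1,
      (μ {ω | U ω ≤ u ∧ V ω ≤ v}).toReal = C u v)
    (hUunif : ∀ u ∈ Icc (0:ℝ) 1, (μ {ω | U ω ≤ u}).toReal = u)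
    (hVunif : ∀ v ∈ Icc (0:ℝ) 1, (μ {ω | V ω ≤ v}).toReal = v)
    (hint : Integrable (fun ω => U ω * V ω) μ) :
    6 * ∫ u in (0:ℝ)..1, ∫ v in (0:ℝ)..1, (C u v + C u (1 - v) - u) =
      12 * (∫ ω, U ω * V ω ∂μ) - 3 := by
  have hU01 : ∀ᵐ ω ∂μ, U ω ∈ Icc (0:ℝ) 1 :=
    mem01_ae μ U hU (hUunif 0 (by norm_num)) (hUunif 1 (by norm_num))
  have hV01 : ∀ᵐ ω ∂μ, V ω ∈ Icc (0:ℝ) 1 :=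
    mem01_ae μ V hV (hVunif 0 (by norm_num)) (hVunif 1 (by norm_num))
  set g : ℝ → ℝ → ℝ := fun u v => (μ {ω | U ω ≤ u ∧ V ω ≤ v}).toReal with hg
  have hgmono : ∀ u, Monotone (fun v => g u v) := fun u v1 v2 h =>
    ENNReal.toReal_mono (measure_ne_top μ _)
      (measure_mono fun ω hω => ⟨hω.1, le_trans hω.2 h⟩)
  have hgmono' : ∀ v, Monotone (fun u => g u v) := fun v u1 u2 h =>
    ENNReal.toReal_mono (measure_ne_top μ _)
      (measure_mono fun ω hω => ⟨le_trans hω.1 h, hω.2⟩)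
  set G : ℝ → ℝ := fun u => ∫ v in (0:ℝ)..1, g u v with hG
  -- inner integral computation
  have hinner : ∀ u ∈ Icc (0:ℝ) 1,
      ∫ v in (0:ℝ)..1, (C u v + C u (1 - v) - u) = 2 * G u - u := by
    intro u hu
    have e1 : ∫ v in (0:ℝ)..1, (C u v + C u (1 - v) - u)
        = ∫ v in (0:ℝ)..1, (g u v + g u (1 - v) - u) := by
      refine intervalIntegral.integral_congr fun v hv => ?_
      rw [uIcc_of_le zero_le_one] at hv
      have hv' : 1 - v ∈ Icc (0:ℝ) 1 := ⟨by linarith [hv.2], by linarith [hv.1]⟩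
      rw [← hjoint u hu v hv, ← hjoint u hu _ hv']
    have i1 : IntervalIntegrable (fun v => g u v) volume 0 1 :=
      (hgmono u).intervalIntegrable
    have i2 : IntervalIntegrable (fun v => g u (1 - v)) volume 0 1 := by
      have ha : Antitone (fun v : ℝ => g u (1 - v)) :=
        (hgmono u).comp_antitone (fun a b h => by exact sub_le_sub_left h 1)
      exact ha.intervalIntegrable
    have e2 : ∫ v in (0:ℝ)..1, g u (1 - v) = ∫ v in (0:ℝ)..1, g u v := by
      have := intervalIntegral.integral_comp_sub_left (a := (0:ℝ)) (b := 1)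
        (fun v => g u v) 1
      simpa using this
    rw [e1, intervalIntegral.integral_sub (i1.add i2) intervalIntegrable_const,
      intervalIntegral.integral_add i1 i2, e2, intervalIntegral.integral_const]
    simp [hG]
    ring
  have hGmono : Monotone G := fun u1 u2 h =>
    intervalIntegral.integral_mono_on zero_le_one (hgmono u1).intervalIntegrable
      (hgmono u2).intervalIntegrable (fun v _ => hgmono' v h)
  -- the double integral of g
  have hkey : ∫ u in (0:ℝ)..1, G u = ∫ ω, (1 - U ω) * (1 - V ω) ∂μ :=
    key_aux μ U V hU hV hU01 hV01
  -- expectations of U and V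
  have hUint : Integrable U μ := by
    refine Integrable.mono' (integrable_const 1) hU.aestronglyMeasurable ?_
    filter_upwards [hU01] with ω h
    rw [Real.norm_eq_abs, abs_le]; exact ⟨by linarith [h.1], h.2⟩
  have hVint : Integrable V μ := by
    refine Integrable.mono' (integrable_const 1) hV.aestronglyMeasurable ?_
    filter_upwards [hV01] with ω h
    rw [Real.norm_eq_abs, abs_le]; exact ⟨by linarith [h.1], h.2⟩
  have hzero01 : ∀ᵐ ω ∂μ, (fun _ : Ω => (0:ℝ)) ω ∈ Icc (0:ℝ) 1 :=
    Filter.Eventually.of_forall fun ω => ⟨le_refl 0, zero_le_one⟩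
  have hmean : ∀ (X : Ω → ℝ), Measurable X → (∀ᵐ ω ∂μ, X ω ∈ Icc (0:ℝ) 1) →
      (∀ u ∈ Icc (0:ℝ) 1, (μ {ω | X ω ≤ u}).toReal = u) → Integrable X μ →
      ∫ ω, X ω ∂μ = 1 / 2 := by
    intro X hXm hX01 hXunif hXint
    have hk := key_aux μ X (fun _ => 0) hXm measurable_const hX01 hzero01
    have hL : ∫ u in (0:ℝ)..1, ∫ v in (0:ℝ)..1,
        (μ {ω | X ω ≤ u ∧ (fun _ : Ω => (0:ℝ)) ω ≤ v}).toReal = 1 / 2 := by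
      have e3 : ∀ u ∈ Icc (0:ℝ) 1, ∫ v in (0:ℝ)..1,
          (μ {ω | X ω ≤ u ∧ (fun _ : Ω => (0:ℝ)) ω ≤ v}).toReal = u := by
        intro u hu
        have e4 : ∫ v in (0:ℝ)..1,
            (μ {ω | X ω ≤ u ∧ (fun _ : Ω => (0:ℝ)) ω ≤ v}).toReal
            = ∫ v in (0:ℝ)..1, (μ {ω | X ω ≤ u}).toReal := by
          refine intervalIntegral.integral_congr fun v hv => ?_
          rw [uIcc_of_le zero_le_one] at hv
          congr 2
          ext ω
          simp [hv.1]
        rw [e4, intervalIntegral.integral_const, hXunif u hu]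
        simp
      calc ∫ u in (0:ℝ)..1, ∫ v in (0:ℝ)..1,
            (μ {ω | X ω ≤ u ∧ (fun _ : Ω => (0:ℝ)) ω ≤ v}).toReal
          = ∫ u in (0:ℝ)..1, u := by
            refine intervalIntegral.integral_congr fun u hu => ?_
            rw [uIcc_of_le zero_le_one] at hu
            exact e3 u hu
        _ = 1 / 2 := by rw [integral_id]; norm_num
    have hR : ∫ ω, (1 - X ω) * (1 - (fun _ : Ω => (0:ℝ)) ω) ∂μ = 1 - ∫ ω, X ω ∂μ := by
      have e5 : (fun ω => (1 - X ω) * (1 - (fun _ : Ω => (0:ℝ)) ω)) = fun ω => 1 - X ω := by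
        funext ω; ring
      have iA : Integrable (fun ω => (1:ℝ) - X ω) μ := by
        exact (integrable_const 1).sub hXint
      rw [e5, integral_sub (integrable_const 1) hXint, integral_const]
      simp
    rw [hL, hR] at hk
    linarith
  have hEU : ∫ ω, U ω ∂μ = 1 / 2 := hmean U hU hU01 hUunif hUint
  have hEV : ∫ ω, V ω ∂μ = 1 / 2 := hmean V hV hV01 hVunif hVint
  -- E[(1-U)(1-V)] = E[UV]
  have hprod : ∫ ω, (1 - U ω) * (1 - V ω) ∂μ = ∫ ω, U ω * V ω ∂μ := by
    have e : (fun ω => (1 - U ω) * (1 - V ω))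
        = fun ω => (1 - U ω) - (V ω - U ω * V ω) := by
      funext ω; ring
    have iA : Integrable (fun ω => (1:ℝ) - U ω) μ := by
      exact (integrable_const 1).sub hUint
    have iB : Integrable (fun ω => V ω - U ω * V ω) μ := by
      exact hVint.sub hint
    rw [e, integral_sub iA iB, integral_sub (integrable_const 1) hUint,
      integral_sub hVint hint, integral_const]
    simp [hEU, hEV]
    ring
  -- assemble
  have houter : ∫ u in (0:ℝ)..1, ∫ v in (0:ℝ)..1, (C u v + C u (1 - v) - u)
      = ∫ u in (0:ℝ)..1, (2 * G u - u) := by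
    refine intervalIntegral.integral_congr fun u hu => ?_
    rw [uIcc_of_le zero_le_one] at hu
    exact hinner u hu
  have iG : IntervalIntegrable G volume 0 1 := hGmono.intervalIntegrable
  have hsplit : ∫ u in (0:ℝ)..1, (2 * G u - u)
      = 2 * (∫ u in (0:ℝ)..1, G u) - 1 / 2 := by
    have iid : IntervalIntegrable (fun u : ℝ => u) volume 0 1 :=
      (continuous_id.intervalIntegrable 0 1)
    rw [intervalIntegral.integral_sub (iG.const_mul 2) iid,
      intervalIntegral.integral_const_mul, integral_id]
    norm_num
  rw [houter, hsplit, hkey, hprod]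
  ring
end

section
/- If a copula C satisfies the wPQD property C(u,v) + C(u,1-v) ≥ u for all u,v ∈ [0,1], then its Spearman rho coefficient ρ_C = -3 + 12·∫₀¹∫₀¹ C(u,v) dv du satisfies ρ_C ≥ 0. -/
open MeasureTheory Set

/-- If a copula satisfies wPQD (`C(u,v) + C(u,1-v) ≥ u`), then its Spearman rho
`ρ_C = -3 + 12∫∫ C(u,v) dv du` is nonnegative. -/
theorem stmt8 (C : ℝ → ℝ → ℝ) (hC : IsCopula C)
    (hcont : Continuous (fun p : ℝ × ℝ => C p.1 p.2))
    (hwPQD : ∀ u ∈ Icc (0:ℝ) 1, ∀ v ∈ Icc (0:ℝ) 1, u ≤ C u v + C u (1 - v)) :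
    0 ≤ -3 + 12 * ∫ u in (0:ℝ)..1, ∫ v in (0:ℝ)..1, C u v := by
  have hcu : ∀ u : ℝ, Continuous (fun v => C u v) := fun u =>
    hcont.comp (continuous_const.prodMk continuous_id)
  have key : ∀ u ∈ Icc (0:ℝ) 1, u / 2 ≤ ∫ v in (0:ℝ)..1, C u v := by
    intro u hu
    have h1 : (∫ v in (0:ℝ)..1, C u (1 - v)) = ∫ v in (0:ℝ)..1, C u v := by
      have := intervalIntegral.integral_comp_sub_left (a := (0:ℝ)) (b := 1)
        (fun v => C u v) 1
      simpa using this
    have hc2 : Continuous (fun v : ℝ => C u (1 - v)) :=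
      (hcu u).comp (continuous_const.sub continuous_id)
    have h3 : (∫ v in (0:ℝ)..1, u) ≤ ∫ v in (0:ℝ)..1, (C u v + C u (1-v)) := by
      apply intervalIntegral.integral_mono_on (by norm_num)
      · exact intervalIntegrable_const
      · exact ((hcu u).add hc2).intervalIntegrable _ _
      · intro v hv; exact hwPQD u hu v hv
    rw [intervalIntegral.integral_add ((hcu u).intervalIntegrable _ _)
      (hc2.intervalIntegrable _ _), h1] at h3
    simp at h3
    linarith
  have hcontI : Continuous (fun u => ∫ v in (0:ℝ)..1, C u v) :=
    intervalIntegral.continuous_parametric_intervalIntegral_of_continuous' hcont 0 1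
  have h4 : (∫ u in (0:ℝ)..1, u/2) ≤ ∫ u in (0:ℝ)..1, ∫ v in (0:ℝ)..1, C u v :=
    intervalIntegral.integral_mono_on (by norm_num)
      ((continuous_id.div_const 2).intervalIntegrable _ _)
      (hcontI.intervalIntegrable _ _) key
  have h5 : (∫ u in (0:ℝ)..1, u/2) = 1/4 := by
    rw [intervalIntegral.integral_div, integral_id]
    norm_num
  linarith
end

section
/- Let (X,Z) have survival copula Ĉ with marginals F̄(x) = P(X > x), Ḡ(z) = P(Z > z), so that P(X > x, Z > z) = Ĉ(F̄(x), Ḡ(z)). If Z is integrable, symmetric around zero, and Ĉ(u,v) + Ĉ(u,1-v) ≥ u for all u,v ∈ [0,1], then for every x with F̄(x) > 0, E(Z | X > x) ≥ 0; consequently X ≤_CX X+Z. -/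
open MeasureTheory Set

/-- Conditional expectation of `Z` given an event `A`: `E(Z·1_A)/P(A)`. -/
noncomputable def condExpEvent {Ω : Type*} [MeasurableSpace Ω] (μ : Measure Ω)
    (Z : Ω → ℝ) (A : Set Ω) : ℝ := (∫ ω in A, Z ω ∂μ) / (μ A).toReal

/-
On the event `{X > x}`, the copula condition together with the symmetry `Ḡ(-t) = 1 - Ḡ(t)`
says that the lower tail `P(Z < -t, X > x)` never exceeds the upper tail `P(Z ≥ t, X > x)`;
integrating tails gives `E(Z; X > x) ≥ 0`. The same holds for `{X ≥ x}` by a limit, hence for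
`{X ∈ U}` with `U` any upper set, and by the layer-cake formula `E(g(X) Z) ≥ 0` for bounded
nondecreasing `g`. For convex `u` with right derivative `g`, `u(X + Z) - u(X) ≥ g(X) Z`; truncating
`g` and applying Fatou's lemma to negative parts gives `E u(X) ≤ E u(X + Z)`.
-/

open Filter Topology

lemma IsUpperSet.eq_empty_or_univ_or_Ici_or_Ioi {α : Type*}
    [ConditionallyCompleteLinearOrder α] {U : Set α} (hU : IsUpperSet U) :
    U = ∅ ∨ U = univ ∨ U = Ici (sInf U) ∨ U = Ioi (sInf U) := by
  rcases U.eq_empty_or_nonempty with hempty | hne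
  · exact Or.inl hempty
  by_cases hbdd : BddBelow U
  · by_cases hmem : sInf U ∈ U
    · exact Or.inr <| Or.inr <| Or.inl <|
        (hU.Ici_subset hmem).antisymm' fun y hy => csInf_le hbdd hy
    · refine Or.inr <| Or.inr <| Or.inr <| Subset.antisymm (fun y hy => ?_) fun y hy => ?_
      · exact (csInf_le hbdd hy).lt_of_ne fun h => hmem (h ▸ hy)
      · obtain ⟨w, hw, hwy⟩ := exists_lt_of_csInf_lt hne hy
        exact hU hwy.le hw
  · refine Or.inr <| Or.inl <| eq_univ_of_forall fun y => ?_
    obtain ⟨w, hw, hwy⟩ := not_bddBelow_iff.1 hbdd y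
    exact hU hwy.le hw

section IntegralSign

variable {Ω : Type*} [MeasurableSpace Ω] {μ : Measure Ω}

lemma MeasureTheory.Integrable.lintegral_ofReal_ne_top {f : Ω → ℝ} (hf : Integrable f μ) :
    ∫⁻ ω, ENNReal.ofReal (f ω) ∂μ ≠ ⊤ :=
  ne_top_of_le_ne_top hf.2.ne (lintegral_mono fun ω => Real.ofReal_le_enorm (f ω))

lemma integral_nonneg_iff_lintegral_ofReal_neg_le {f : Ω → ℝ} (hf : Integrable f μ) :
    0 ≤ ∫ ω, f ω ∂μ ↔ ∫⁻ ω, ENNReal.ofReal (-f ω) ∂μ ≤ ∫⁻ ω, ENNReal.ofReal (f ω) ∂μ := by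
  rw [integral_eq_lintegral_pos_part_sub_lintegral_neg_part hf, sub_nonneg]
  exact ENNReal.toReal_le_toReal hf.neg.lintegral_ofReal_ne_top hf.lintegral_ofReal_ne_top

lemma lintegral_ofReal_eq_lintegral_meas_le {f : Ω → ℝ} (hf : AEMeasurable f μ) :
    ∫⁻ ω, ENNReal.ofReal (f ω) ∂μ = ∫⁻ t in Ioi 0, μ {ω | t ≤ f ω} := by
  have h := lintegral_eq_lintegral_meas_le μ (ae_of_all _ fun ω => le_max_right (f ω) 0)
    (hf.max aemeasurable_const)
  simp only [ENNReal.ofReal_max, ENNReal.ofReal_zero, zero_le, max_eq_left] at h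
  rw [h]
  refine setLIntegral_congr_fun measurableSet_Ioi fun t (ht : 0 < t) => ?_
  simp only [le_max_iff, ht.not_ge, or_false]

lemma lintegral_ofReal_neg_eq_lintegral_meas_lt {f : Ω → ℝ} (hf : AEMeasurable f μ) :
    ∫⁻ ω, ENNReal.ofReal (-f ω) ∂μ = ∫⁻ t in Ioi 0, μ {ω | f ω < -t} := by
  have h := lintegral_eq_lintegral_meas_lt μ (ae_of_all _ fun ω => le_max_right (-f ω) 0)
    (hf.neg.max aemeasurable_const)
  simp only [ENNReal.ofReal_max, ENNReal.ofReal_zero, zero_le, max_eq_left] at h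
  rw [h]
  refine setLIntegral_congr_fun measurableSet_Ioi fun t (ht : 0 < t) => ?_
  simp only [lt_max_iff, ht.not_gt, or_false, lt_neg]

lemma integral_nonneg_of_meas_lt_neg_le {f : Ω → ℝ} (hf : Integrable f μ)
    (h : ∀ t > 0, μ {ω | f ω < -t} ≤ μ {ω | t ≤ f ω}) : 0 ≤ ∫ ω, f ω ∂μ := by
  rw [integral_nonneg_iff_lintegral_ofReal_neg_le hf,
    lintegral_ofReal_eq_lintegral_meas_le hf.aemeasurable,
    lintegral_ofReal_neg_eq_lintegral_meas_lt hf.aemeasurable]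
  exact setLIntegral_mono' measurableSet_Ioi h

/-- `V` is not assumed integrable: Fatou's lemma applied to the negative parts of the `Vn`
bounds `∫ W⁻` by `∫ W⁺`. -/
lemma integral_nonneg_of_tendsto_of_le {V W : Ω → ℝ} {Vn : ℕ → Ω → ℝ}
    (hW : Integrable W μ) (hVn : ∀ n, Integrable (Vn n) μ) (hVn0 : ∀ n, 0 ≤ ∫ ω, Vn n ω ∂μ)
    (hlim : ∀ ω, Tendsto (Vn · ω) atTop (𝓝 (V ω))) (hVW : ∀ ω, V ω ≤ W ω)
    (hVnW : ∀ n ω, Vn n ω ≤ max (W ω) 0) : 0 ≤ ∫ ω, W ω ∂μ := by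
  have hneg (ω : Ω) :
      ENNReal.ofReal (-W ω) ≤ liminf (fun n => ENNReal.ofReal (-Vn n ω)) atTop := by
    rw [(ENNReal.tendsto_ofReal (hlim ω).neg).liminf_eq]
    exact ENNReal.ofReal_le_ofReal (neg_le_neg (hVW ω))
  have hpos (n : ℕ) : ∫⁻ ω, ENNReal.ofReal (-Vn n ω) ∂μ ≤ ∫⁻ ω, ENNReal.ofReal (W ω) ∂μ :=
    ((integral_nonneg_iff_lintegral_ofReal_neg_le (hVn n)).1 (hVn0 n)).trans <|
      lintegral_mono fun ω =>
        (ENNReal.ofReal_le_ofReal (hVnW n ω)).trans_eq (by simp [ENNReal.ofReal_max])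
  rw [integral_nonneg_iff_lintegral_ofReal_neg_le hW]
  calc ∫⁻ ω, ENNReal.ofReal (-W ω) ∂μ
      ≤ ∫⁻ ω, liminf (fun n => ENNReal.ofReal (-Vn n ω)) atTop ∂μ := lintegral_mono hneg
    _ ≤ liminf (fun n => ∫⁻ ω, ENNReal.ofReal (-Vn n ω) ∂μ) atTop :=
      lintegral_liminf_le' fun n => (hVn n).neg.aemeasurable.ennreal_ofReal
    _ ≤ ∫⁻ ω, ENNReal.ofReal (W ω) ∂μ := liminf_le_of_le (by isBoundedDefault) fun _ hb =>
      let ⟨n, hn⟩ := hb.exists; hn.trans (hpos n)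

lemma integral_mul_nonneg_of_setIntegral_superlevel_nonneg [SFinite μ] {G Z : Ω → ℝ}
    {a b : ℝ} (hG : Measurable G) (hGab : ∀ ω, G ω ∈ Icc a b) (hZ : Integrable Z μ)
    (hZ0 : ∫ ω, Z ω ∂μ = 0) (hsup : ∀ s, 0 ≤ ∫ ω in {ω | s < G ω}, Z ω ∂μ) :
    0 ≤ ∫ ω, G ω * Z ω ∂μ := by
  set F : Ω → ℝ → ℝ := fun ω s => (Iio (G ω)).indicator (fun _ => Z ω) s
  have hinner (ω : Ω) : ∫ s in Ioo a b, F ω s = (G ω - a) * Z ω := by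
    rw [setIntegral_indicator measurableSet_Iio, Ioo_inter_Iio, min_eq_right (hGab ω).2,
      setIntegral_const, Real.volume_real_Ioo_of_le (hGab ω).1, smul_eq_mul]
  have hF : Integrable (Function.uncurry F) (μ.prod (volume.restrict (Ioo a b))) := by
    have hmeas : MeasurableSet {p : Ω × ℝ | p.2 < G p.1} :=
      measurableSet_lt measurable_snd (hG.comp measurable_fst)
    refine Integrable.mono' (hZ.norm.comp_fst _)
      ((hZ.1.comp_fst.indicator hmeas).congr (ae_of_all _ fun p => rfl))
      (ae_of_all _ fun p => norm_indicator_le_norm_self (fun _ => Z p.1) p.2)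
  calc 0 ≤ ∫ s in Ioo a b, ∫ ω in {ω | s < G ω}, Z ω ∂μ :=
        setIntegral_nonneg measurableSet_Ioo fun s _ => hsup s
    _ = ∫ s in Ioo a b, ∫ ω, F ω s ∂μ := by
      congr! 2 with s
      rw [← integral_indicator (measurableSet_lt measurable_const hG)]
      rfl
    _ = ∫ ω, (G ω - a) * Z ω ∂μ := by
      rw [← integral_integral_swap hF]
      simp_rw [hinner]
    _ = ∫ ω, G ω * Z ω ∂μ := by
      simp_rw [sub_mul]
      rw [integral_sub ?_ (hZ.const_mul a), integral_const_mul, hZ0, mul_zero, sub_zero]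
      exact hZ.bdd_mul hG.aestronglyMeasurable
        (ae_of_all _ fun ω => abs_le_max_abs_abs (hGab ω).1 (hGab ω).2)

end IntegralSign

section ConvexOrder

variable {Ω : Type*} [MeasurableSpace Ω] {μ : Measure Ω} {X Z : Ω → ℝ}

lemma setIntegral_setOf_le_nonneg (hX : Measurable X) (hZ : Integrable Z μ)
    (hpos : ∀ x, 0 ≤ ∫ ω in {ω | x < X ω}, Z ω ∂μ) (x : ℝ) :
    0 ≤ ∫ ω in {ω | x ≤ X ω}, Z ω ∂μ := by
  set s : ℕ → Set Ω := fun n => {ω | x - 1 / (n + 1) < X ω}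
  have hanti : Antitone s := fun n m hnm ω (hω : x - 1 / (m + 1) < X ω) =>
    show x - 1 / (n + 1) < X ω by linarith [Nat.one_div_le_one_div (α := ℝ) hnm]
  have hinter : ⋂ n, s n = {ω | x ≤ X ω} := by
    ext ω
    simp only [s, mem_iInter, mem_ofPred_eq]
    refine ⟨fun h => not_lt.1 fun hlt => ?_,
      fun h n => by linarith [Nat.one_div_pos_of_nat (α := ℝ) (n := n)]⟩
    obtain ⟨n, hn⟩ := exists_nat_one_div_lt (sub_pos.2 hlt)
    linarith [h n]
  have hlim := tendsto_setIntegral_of_antitone (μ := μ) (f := Z)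
    (fun n => measurableSet_lt measurable_const hX) hanti ⟨0, hZ.integrableOn⟩
  rw [hinter] at hlim
  exact ge_of_tendsto' hlim fun n => hpos _

lemma setIntegral_preimage_nonneg_of_isUpperSet (hX : Measurable X) (hZ : Integrable Z μ)
    (hZ0 : ∫ ω, Z ω ∂μ = 0) (hpos : ∀ x, 0 ≤ ∫ ω in {ω | x < X ω}, Z ω ∂μ)
    {U : Set ℝ} (hU : IsUpperSet U) : 0 ≤ ∫ ω in X ⁻¹' U, Z ω ∂μ := by
  rcases hU.eq_empty_or_univ_or_Ici_or_Ioi with h | h | h | h <;> rw [h]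
  · simp
  · simp [hZ0]
  · exact setIntegral_setOf_le_nonneg hX hZ hpos _
  · exact hpos _

lemma integral_mul_nonneg_of_monotone_of_bounded [SFinite μ] (hX : Measurable X)
    (hZ : Integrable Z μ) (hZ0 : ∫ ω, Z ω ∂μ = 0)
    (hpos : ∀ x, 0 ≤ ∫ ω in {ω | x < X ω}, Z ω ∂μ) {g : ℝ → ℝ} (hg : Monotone g) {a b : ℝ}
    (hab : ∀ y, g y ∈ Icc a b) : 0 ≤ ∫ ω, g (X ω) * Z ω ∂μ :=
  integral_mul_nonneg_of_setIntegral_superlevel_nonneg (hg.measurable.comp hX) (fun _ => hab _)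
    hZ hZ0 fun s => setIntegral_preimage_nonneg_of_isUpperSet hX hZ hZ0 hpos
      (U := {y | s < g y}) fun _ _ hyz hy => hy.trans_le (hg hyz)

lemma ConvexOn.add_rightDeriv_mul_sub_le {u : ℝ → ℝ} (hu : ConvexOn ℝ univ u) (x y : ℝ) :
    u x + derivWithin u (Ioi x) x * (y - x) ≤ u y := by
  have hx : x ∈ interior univ := by simp
  rcases lt_trichotomy x y with hxy | rfl | hyx
  · have h := hu.rightDeriv_le_slope_of_mem_interior hx (mem_univ y) hxy
    rw [slope_def_field, le_div_iff₀ (sub_pos.2 hxy)] at h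
    linarith
  · simp
  · have h := (hu.slope_le_leftDeriv_of_mem_interior (mem_univ y) hx hyx).trans
      (hu.leftDeriv_le_rightDeriv_of_mem_interior hx)
    rw [slope_def_field, div_le_iff₀ (sub_pos.2 hyx)] at h
    linarith

lemma ConvexOn.monotone_rightDeriv {u : ℝ → ℝ} (hu : ConvexOn ℝ univ u) :
    Monotone fun x => derivWithin u (Ioi x) x := fun x y hxy =>
  hu.monotoneOn_rightDeriv (by simp) (by simp) hxy

def clip (n : ℕ) (y : ℝ) : ℝ := max (-n) (min n y)

lemma clip_monotone (n : ℕ) : Monotone (clip n) := fun _ _ h =>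
  max_le_max le_rfl (min_le_min le_rfl h)

lemma clip_mem_Icc (n : ℕ) (y : ℝ) : clip n y ∈ Icc (-(n : ℝ)) n :=
  ⟨le_max_left _ _, max_le (by simp) (min_le_left _ _)⟩

lemma eventually_clip_eq (y : ℝ) : ∀ᶠ n in atTop, clip n y = y := by
  obtain ⟨N, hN⟩ := exists_nat_ge |y|
  filter_upwards [eventually_ge_atTop N] with n hn
  have hy : |y| ≤ n := hN.trans (Nat.cast_le.2 hn)
  rw [clip, min_eq_right (le_of_abs_le hy), max_eq_right (neg_le_of_abs_le hy)]

lemma clip_mul_le_max (n : ℕ) (y z : ℝ) : clip n y * z ≤ max (y * z) 0 := by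
  have h : (0 ≤ clip n y ∧ clip n y ≤ y) ∨ (y ≤ clip n y ∧ clip n y ≤ 0) := by
    rcases le_total 0 y with hy | hy
    · exact Or.inl ⟨le_max_of_le_right (le_min n.cast_nonneg hy),
        max_le (by linarith [n.cast_nonneg (α := ℝ)]) (min_le_right _ _)⟩
    · exact Or.inr ⟨le_max_of_le_right (le_min (hy.trans n.cast_nonneg) le_rfl),
        max_le (by simp) (min_le_of_right_le hy)⟩
  rcases h with ⟨h1, h2⟩ | ⟨h1, h2⟩ <;> rcases le_total 0 z with hz | hz <;>
    nlinarith [le_max_left (y * z) 0, le_max_right (y * z) 0]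

lemma integral_le_integral_add_of_convexOn [SFinite μ] (hX : Measurable X)
    (hZ : Integrable Z μ) (hZ0 : ∫ ω, Z ω ∂μ = 0)
    (hpos : ∀ x, 0 ≤ ∫ ω in {ω | x < X ω}, Z ω ∂μ) {u : ℝ → ℝ} (hu : ConvexOn ℝ univ u)
    (hu₁ : Integrable (fun ω => u (X ω)) μ) (hu₂ : Integrable (fun ω => u (X ω + Z ω)) μ) :
    ∫ ω, u (X ω) ∂μ ≤ ∫ ω, u (X ω + Z ω) ∂μ := by
  set g : ℝ → ℝ := fun x => derivWithin u (Ioi x) x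
  have hg : Monotone g := hu.monotone_rightDeriv
  have hsub (ω : Ω) : g (X ω) * Z ω ≤ u (X ω + Z ω) - u (X ω) := by
    have h := hu.add_rightDeriv_mul_sub_le (X ω) (X ω + Z ω)
    rw [add_sub_cancel_left] at h
    linarith
  rw [← sub_nonneg, ← integral_sub hu₂ hu₁]
  refine integral_nonneg_of_tendsto_of_le (hu₂.sub hu₁)
    (Vn := fun n ω => clip n (g (X ω)) * Z ω) (fun n => ?_) (fun n => ?_) (fun ω => ?_) hsub
    fun n ω => (clip_mul_le_max n _ _).trans (max_le_max (hsub ω) le_rfl)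
  · exact hZ.bdd_mul (((clip_monotone n).comp hg).measurable.comp hX).aestronglyMeasurable
      (ae_of_all _ fun ω => abs_le.2 (clip_mem_Icc n _))
  · exact integral_mul_nonneg_of_monotone_of_bounded hX hZ hZ0 hpos ((clip_monotone n).comp hg)
      fun y => clip_mem_Icc n (g y)
  · exact tendsto_const_nhds.congr'
      ((eventually_clip_eq (g (X ω))).mono fun n hn => (congrArg (· * Z ω) hn).symm)

end ConvexOrder

section Copula

variable {Ω : Type*} [MeasurableSpace Ω] {μ : Measure Ω} [IsProbabilityMeasure μ]
  {X Z : Ω → ℝ}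

lemma measure_le_neg_eq_of_symm (hZ : Measurable Z)
    (hsymm : ∀ z : ℝ, (μ {ω | -z < Z ω}).toReal = 1 - (μ {ω | z < Z ω}).toReal) (t : ℝ) :
    μ {ω | Z ω ≤ -t} = μ {ω | t < Z ω} := by
  have hcompl : {ω | Z ω ≤ -t} = {ω | -t < Z ω}ᶜ := by ext; simp
  rw [← ENNReal.toReal_eq_toReal_iff' (measure_ne_top _ _) (measure_ne_top _ _), hcompl,
    ← measureReal_def, probReal_compl_eq_one_sub (measurableSet_lt measurable_const hZ),
    measureReal_def, hsymm, sub_sub_cancel]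

lemma integral_eq_zero_of_symm (hZm : Measurable Z) (hZ : Integrable Z μ)
    (hsymm : ∀ z : ℝ, (μ {ω | -z < Z ω}).toReal = 1 - (μ {ω | z < Z ω}).toReal) :
    ∫ ω, Z ω ∂μ = 0 := by
  have hle := measure_le_neg_eq_of_symm hZm hsymm
  refine le_antisymm ?_ (integral_nonneg_of_meas_lt_neg_le hZ fun t _ => ?_)
  · rw [← neg_nonneg, ← integral_neg]
    refine integral_nonneg_of_meas_lt_neg_le hZ.neg fun t _ => ?_
    simp only [neg_lt_neg_iff, le_neg]
    exact (hle t).ge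
  · calc μ {ω | Z ω < -t} ≤ μ {ω | Z ω ≤ -t} := measure_mono fun ω (h : Z ω < -t) => h.le
      _ = μ {ω | t < Z ω} := hle t
      _ ≤ μ {ω | t ≤ Z ω} := measure_mono fun ω (h : t < Z ω) => h.le

lemma setIntegral_setOf_lt_nonneg_of_copula (hZm : Measurable Z) (hZ : Integrable Z μ)
    {C : ℝ → ℝ → ℝ}
    (hjoint : ∀ x z : ℝ, (μ {ω | x < X ω ∧ z < Z ω}).toReal =
      C (μ {ω | x < X ω}).toReal (μ {ω | z < Z ω}).toReal)
    (hsymm : ∀ z : ℝ, (μ {ω | -z < Z ω}).toReal = 1 - (μ {ω | z < Z ω}).toReal)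
    (hC : ∀ u ∈ Icc (0:ℝ) 1, ∀ v ∈ Icc (0:ℝ) 1, u ≤ C u v + C u (1 - v)) (x : ℝ) :
    0 ≤ ∫ ω in {ω | x < X ω}, Z ω ∂μ := by
  set A := {ω | x < X ω}
  refine integral_nonneg_of_meas_lt_neg_le hZ.restrict fun t _ => ?_
  rw [Measure.restrict_apply (measurableSet_lt hZm measurable_const),
    Measure.restrict_apply (measurableSet_le measurable_const hZm),
    ← ENNReal.toReal_le_toReal (measure_ne_top _ _) (measure_ne_top _ _)]
  set G := μ.real {ω | t < Z ω}
  have hsplit : μ.real (A ∩ {ω | -t < Z ω}) + μ.real (A \ {ω | -t < Z ω}) = μ.real A :=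
    measureReal_inter_add_sdiff (measurableSet_lt measurable_const hZm)
  have hupper : μ.real (A ∩ {ω | t < Z ω}) = C (μ.real A) G := hjoint x t
  have hlower : μ.real (A ∩ {ω | -t < Z ω}) = C (μ.real A) (1 - G) :=
    (hjoint x (-t)).trans (by rw [hsymm]; rfl)
  have hw := hC (μ.real A) ⟨measureReal_nonneg, measureReal_le_one⟩ G
    ⟨measureReal_nonneg, measureReal_le_one⟩
  calc μ.real ({ω | Z ω < -t} ∩ A) ≤ μ.real (A \ {ω | -t < Z ω}) :=
        measureReal_mono fun ω h => ⟨h.2, fun (h' : -t < Z ω) => lt_asymm h' h.1⟩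
    _ ≤ μ.real (A ∩ {ω | t < Z ω}) := by linarith
    _ ≤ μ.real ({ω | t ≤ Z ω} ∩ A) :=
        measureReal_mono fun ω h => ⟨show t ≤ Z ω from (h.2 : t < Z ω).le, h.1⟩

end Copula

theorem stmt14_general {Ω : Type*} [MeasurableSpace Ω] (μ : Measure Ω) [IsProbabilityMeasure μ]
    (X Z : Ω → ℝ) (hX : Measurable X) (hZmeas : Measurable Z)
    (hZint : Integrable Z μ)
    (Chat : ℝ → ℝ → ℝ)
    (hjoint : ∀ x z : ℝ, (μ {ω | x < X ω ∧ z < Z ω}).toReal =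
      Chat (μ {ω | x < X ω}).toReal (μ {ω | z < Z ω}).toReal)
    (hsymm : ∀ z : ℝ, (μ {ω | -z < Z ω}).toReal = 1 - (μ {ω | z < Z ω}).toReal)
    (hwPQD : ∀ u ∈ Icc (0:ℝ) 1, ∀ v ∈ Icc (0:ℝ) 1, u ≤ Chat u v + Chat u (1 - v)) :
    (∀ x : ℝ, 0 < μ {ω | x < X ω} → 0 ≤ condExpEvent μ Z {ω | x < X ω}) ∧
    (∀ u : ℝ → ℝ, ConvexOn ℝ univ u →
      Integrable (fun ω => u (X ω)) μ → Integrable (fun ω => u (X ω + Z ω)) μ →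
      ∫ ω, u (X ω) ∂μ ≤ ∫ ω, u (X ω + Z ω) ∂μ) := by
  have hpos (x : ℝ) : 0 ≤ ∫ ω in {ω | x < X ω}, Z ω ∂μ :=
    setIntegral_setOf_lt_nonneg_of_copula hZmeas hZint hjoint hsymm hwPQD x
  have hZ0 : ∫ ω, Z ω ∂μ = 0 := integral_eq_zero_of_symm hZmeas hZint hsymm
  exact ⟨fun x _ => div_nonneg (hpos x) ENNReal.toReal_nonneg,
    fun u hu hu₁ hu₂ => integral_le_integral_add_of_convexOn hX hZint hZ0 hpos hu hu₁ hu₂⟩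

/-- If `(X,Z)` has survival copula `Ĉ`, `Z` is integrable and symmetric around zero,
and `Ĉ(u,v) + Ĉ(u,1-v) ≥ u`, then `E(Z | X > x) ≥ 0` whenever `P(X > x) > 0`;
consequently `X ≤_CX X + Z`. -/
theorem stmt14 {Ω : Type*} [MeasurableSpace Ω] (μ : Measure Ω) [IsProbabilityMeasure μ]
    (X Z : Ω → ℝ) (hX : Measurable X) (hZmeas : Measurable Z)
    (hXint : Integrable X μ) (hZint : Integrable Z μ)
    (Chat : ℝ → ℝ → ℝ) (hChat : IsCopula Chat)
    (hjoint : ∀ x z : ℝ, (μ {ω | x < X ω ∧ z < Z ω}).toReal =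
      Chat (μ {ω | x < X ω}).toReal (μ {ω | z < Z ω}).toReal)
    (hsymm : ∀ z : ℝ, (μ {ω | -z < Z ω}).toReal = 1 - (μ {ω | z < Z ω}).toReal)
    (hwPQD : ∀ u ∈ Icc (0:ℝ) 1, ∀ v ∈ Icc (0:ℝ) 1, u ≤ Chat u v + Chat u (1 - v)) :
    (∀ x : ℝ, 0 < μ {ω | x < X ω} → 0 ≤ condExpEvent μ Z {ω | x < X ω}) ∧
    (∀ u : ℝ → ℝ, ConvexOn ℝ univ u →
      Integrable (fun ω => u (X ω)) μ → Integrable (fun ω => u (X ω + Z ω)) μ →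
      ∫ ω, u (X ω) ∂μ ≤ ∫ ω, u (X ω + Z ω) ∂μ) :=
  stmt14_general μ X Z hX hZmeas hZint Chat hjoint hsymm hwPQD
end

section
/- Let (X,Z) be a random vector with copula C and continuous marginals F, G, i.e., P(X ≤ x, Z ≤ z) = C(F(x), G(z)). Suppose Z is integrable, left-skewed (1 - G(z) ≤ G(-z) for all z ≥ 0), and C(u,v) + C(u,1-v) ≥ u for all u,v ∈ [0,1]. Then E(Z | X ≤ x) ≤ 0 for all x with F(x) > 0. -/
/-!
On `A = {X ≤ x}`, of mass `u = F x`, the joint law gives `P(A, Z > t) = u - C(u, G t)` and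
`P(A, Z ≤ -t) = C(u, G(-t))`. For `t > 0` the hypothesis on `C` gives
`u - C(u, G t) ≤ C(u, 1 - G t)`, and left skewness with monotonicity of `C(u, ·)` gives
`C(u, 1 - G t) ≤ C(u, G(-t))`. So on `A` the upper tails of `Z` are dominated by its lower tails,
and the layer-cake formula turns this into `∫_A Z⁺ ≤ ∫_A Z⁻`.
-/

open MeasureTheory Set

namespace MeasureTheory

variable {α : Type*} [MeasurableSpace α] {μ : Measure α} {f : α → ℝ}

theorem lintegral_ofReal_eq_lintegral_meas_lt (hf : AEMeasurable f μ) :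
    ∫⁻ x, ENNReal.ofReal (f x) ∂μ = ∫⁻ t in Ioi 0, μ {x | t < f x} := by
  have hpos : ∀ x, ENNReal.ofReal (f x) = ENNReal.ofReal (max (f x) 0) := by simp
  simp_rw [hpos, lintegral_eq_lintegral_meas_lt μ (.of_forall fun x => le_max_right (f x) 0)
    (hf.max aemeasurable_const)]
  refine setLIntegral_congr_fun measurableSet_Ioi fun t (ht : 0 < t) => ?_
  simp_rw [lt_max_iff, ht.not_gt, or_false]

theorem lintegral_ofReal_eq_lintegral_meas_le (hf : AEMeasurable f μ) :
    ∫⁻ x, ENNReal.ofReal (f x) ∂μ = ∫⁻ t in Ioi 0, μ {x | t ≤ f x} := by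
  have hpos : ∀ x, ENNReal.ofReal (f x) = ENNReal.ofReal (max (f x) 0) := by simp
  simp_rw [hpos, lintegral_eq_lintegral_meas_le μ (.of_forall fun x => le_max_right (f x) 0)
    (hf.max aemeasurable_const)]
  refine setLIntegral_congr_fun measurableSet_Ioi fun t (ht : 0 < t) => ?_
  simp_rw [le_max_iff, ht.not_ge, or_false]

theorem integral_nonpos_of_meas_lt_le_meas_le_neg (hf : Integrable f μ)
    (h : ∀ t > 0, μ {x | t < f x} ≤ μ {x | f x ≤ -t}) : ∫ x, f x ∂μ ≤ 0 := by
  have hpos_le_neg : ∫⁻ x, ENNReal.ofReal (f x) ∂μ ≤ ∫⁻ x, ENNReal.ofReal (-f x) ∂μ := by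
    rw [lintegral_ofReal_eq_lintegral_meas_lt hf.aemeasurable,
      lintegral_ofReal_eq_lintegral_meas_le (f := fun x => -f x) hf.aemeasurable.neg]
    refine setLIntegral_mono' measurableSet_Ioi fun t (ht : 0 < t) => ?_
    simpa only [le_neg] using h t ht
  rw [integral_eq_lintegral_pos_part_sub_lintegral_neg_part hf, sub_nonpos]
  have hneg_ne_top : ∫⁻ x, ENNReal.ofReal (-f x) ∂μ ≠ ⊤ :=
    ((lintegral_ofReal_le_lintegral_enorm _).trans_lt hf.neg.2).ne
  exact ENNReal.toReal_mono hneg_ne_top hpos_le_neg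

end MeasureTheory

namespace IsCopula

variable {C : ℝ → ℝ → ℝ}

lemma mono_snd (hC : IsCopula C) {u v₁ v₂ : ℝ} (hu : u ∈ Icc (0:ℝ) 1)
    (hv₁ : v₁ ∈ Icc (0:ℝ) 1) (hv₂ : v₂ ∈ Icc (0:ℝ) 1) (h : v₁ ≤ v₂) : C u v₁ ≤ C u v₂ := by
  have h2 := hC.twoIncreasing 0 u v₁ v₂ ⟨le_rfl, zero_le_one⟩ hu hv₁ hv₂ hu.1 h
  rw [hC.grounded_fst v₁ hv₁, hC.grounded_fst v₂ hv₂] at h2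
  linarith

lemma sub_le_of_one_sub_le (hC : IsCopula C)
    (hwPQD : ∀ u ∈ Icc (0:ℝ) 1, ∀ v ∈ Icc (0:ℝ) 1, u ≤ C u v + C u (1 - v))
    {u v w : ℝ} (hu : u ∈ Icc (0:ℝ) 1) (hv : v ∈ Icc (0:ℝ) 1) (hw : w ∈ Icc (0:ℝ) 1)
    (hvw : 1 - v ≤ w) : u - C u v ≤ C u w := by
  have h1v : 1 - v ∈ Icc (0:ℝ) 1 := ⟨by linarith [hv.2], by linarith [hv.1]⟩
  linarith [hwPQD u hu v hv, hC.mono_snd hu h1v hw hvw]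

end IsCopula

theorem stmt15_general {Ω : Type*} [MeasurableSpace Ω] (μ : Measure Ω) [IsProbabilityMeasure μ]
    (X Z : Ω → ℝ) (hZmeas : Measurable Z)
    (hZint : Integrable Z μ)
    (C : ℝ → ℝ → ℝ) (hC : IsCopula C)
    (F G : ℝ → ℝ)
    (hF : ∀ x : ℝ, F x = (μ {ω | X ω ≤ x}).toReal)
    (hG : ∀ z : ℝ, G z = (μ {ω | Z ω ≤ z}).toReal)
    (hjoint : ∀ x z : ℝ, (μ {ω | X ω ≤ x ∧ Z ω ≤ z}).toReal = C (F x) (G z))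
    (hskew : ∀ z : ℝ, 0 ≤ z → 1 - G z ≤ G (-z))
    (hwPQD : ∀ u ∈ Icc (0:ℝ) 1, ∀ v ∈ Icc (0:ℝ) 1, u ≤ C u v + C u (1 - v)) :
    ∀ x : ℝ, 0 < F x → condExpEvent μ Z {ω | X ω ≤ x} ≤ 0 := by
  intro x _
  set ν := μ.restrict {ω | X ω ≤ x}
  have hunit (s : Set Ω) : μ.real s ∈ Icc (0:ℝ) 1 := ⟨measureReal_nonneg, measureReal_le_one⟩
  have hmass : ν.real univ = F x := by simp [ν, hF, Measure.real]
  have hcdf (z : ℝ) : ν.real {ω | Z ω ≤ z} = C (F x) (G z) := by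
    rw [measureReal_restrict_apply (measurableSet_le hZmeas measurable_const), ← hjoint]
    simp only [Measure.real, ofPred_and, inter_comm]
  have htail (t : ℝ) (ht : 0 < t) : ν {ω | t < Z ω} ≤ ν {ω | Z ω ≤ -t} := by
    have hcompl : {ω | t < Z ω} = {ω | Z ω ≤ t}ᶜ := by ext; simp
    rw [← ENNReal.toReal_le_toReal (measure_ne_top _ _) (measure_ne_top _ _)]
    change ν.real _ ≤ ν.real _
    rw [hcompl, measureReal_compl (measurableSet_le hZmeas measurable_const), hmass, hcdf, hcdf]
    exact hC.sub_le_of_one_sub_le hwPQD (hF x ▸ hunit _) (hG t ▸ hunit _) (hG (-t) ▸ hunit _)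
      (hskew t ht.le)
  exact div_nonpos_of_nonpos_of_nonneg
    (integral_nonpos_of_meas_lt_le_meas_le_neg hZint.restrict htail) ENNReal.toReal_nonneg

/-- If `(X,Z)` has copula `C` with continuous marginals `F`, `G`, `Z` is integrable
and left-skewed (`1 - G(z) ≤ G(-z)` for `z ≥ 0`), and `C(u,v) + C(u,1-v) ≥ u`,
then `E(Z | X ≤ x) ≤ 0` for all `x` with `F(x) > 0`. -/
theorem stmt15 {Ω : Type*} [MeasurableSpace Ω] (μ : Measure Ω) [IsProbabilityMeasure μ]
    (X Z : Ω → ℝ) (hX : Measurable X) (hZmeas : Measurable Z)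
    (hZint : Integrable Z μ)
    (C : ℝ → ℝ → ℝ) (hC : IsCopula C)
    (F G : ℝ → ℝ)
    (hF : ∀ x : ℝ, F x = (μ {ω | X ω ≤ x}).toReal)
    (hG : ∀ z : ℝ, G z = (μ {ω | Z ω ≤ z}).toReal)
    (hFcont : Continuous F) (hGcont : Continuous G)
    (hjoint : ∀ x z : ℝ, (μ {ω | X ω ≤ x ∧ Z ω ≤ z}).toReal = C (F x) (G z))
    (hskew : ∀ z : ℝ, 0 ≤ z → 1 - G z ≤ G (-z))
    (hwPQD : ∀ u ∈ Icc (0:ℝ) 1, ∀ v ∈ Icc (0:ℝ) 1, u ≤ C u v + C u (1 - v)) :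
    ∀ x : ℝ, 0 < F x → condExpEvent μ Z {ω | X ω ≤ x} ≤ 0 :=
  stmt15_general μ X Z hZmeas hZint C hC F G hF hG hjoint hskew hwPQD
end

section
/- Let (U,V) be uniform with density 2 on S = (0,1/2)×(0,1/4) ∪ (0,1/2)×(3/4,1) ∪ (1/2,1)×(1/4,3/4), and set X = U, Z = V². Then E(X) = 1/2, E(Z) = 1/3, E(XZ) = 29/192, and Cov(X,Z) = -1/64 < 0. -/
open MeasureTheory Set

/-- The support set `S` of Example 2. -/
def exSupport : Set (ℝ × ℝ) :=
  (Ioo (0:ℝ) (1/2) ×ˢ Ioo (0:ℝ) (1/4)) ∪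
  (Ioo (0:ℝ) (1/2) ×ˢ Ioo (3/4:ℝ) 1) ∪
  (Ioo (1/2:ℝ) 1 ×ˢ Ioo (1/4:ℝ) (3/4))

/-- The uniform measure with density `2` on `S`. -/
noncomputable def exMeasure : Measure (ℝ × ℝ) :=
  (2 : ENNReal) • (volume.restrict exSupport)

/-!
`S` is a disjoint union of three open rectangles, so by Fubini the integral of a separable
function `f x * g y` against `exMeasure` is twice a sum of three products of one-variable
interval integrals of polynomials; for instance
`E(XZ) = 2 (1/8 · 1/192 + 1/8 · 37/192 + 3/8 · 13/96) = 29/192`.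
-/

lemma setIntegral_Ioo_eq_intervalIntegral {E : Type*} [NormedAddCommGroup E] [NormedSpace ℝ E]
    {f : ℝ → E} {a b : ℝ} (hab : a ≤ b) :
    ∫ x in Ioo a b, f x = ∫ x in a..b, f x := by
  rw [intervalIntegral.integral_of_le hab, integral_Ioc_eq_integral_Ioo]

lemma setIntegral_Ioo_prod_Ioo_mul {𝕜 : Type*} [RCLike 𝕜] (f g : ℝ → 𝕜) {a b c d : ℝ} (hab : a ≤ b) (hcd : c ≤ d) :
    ∫ p in Ioo a b ×ˢ Ioo c d, f p.1 * g p.2 = (∫ x in a..b, f x) * ∫ y in c..d, g y := by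
  rw [Measure.volume_eq_prod, setIntegral_prod_mul, setIntegral_Ioo_eq_intervalIntegral hab,
    setIntegral_Ioo_eq_intervalIntegral hcd]

lemma Continuous.integrableOn_Ioo_prod_Ioo {F : ℝ × ℝ → ℝ} (hF : Continuous F) (a b c d : ℝ) :
    IntegrableOn F (Ioo a b ×ˢ Ioo c d) :=
  (hF.continuousOn.integrableOn_compact (isCompact_Icc.prod isCompact_Icc)).mono_set
    (prod_mono Ioo_subset_Icc_self Ioo_subset_Icc_self)

lemma integral_exMeasure {F : ℝ × ℝ → ℝ} (hF : Continuous F) :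
    ∫ p, F p ∂exMeasure =
      2 * ((∫ p in Ioo 0 (1/2) ×ˢ Ioo 0 (1/4), F p) + (∫ p in Ioo 0 (1/2) ×ˢ Ioo (3/4) 1, F p) +
        ∫ p in Ioo (1/2) 1 ×ˢ Ioo (1/4) (3/4), F p) := by
  have hm : MeasurableSet (Ioo (1/2 : ℝ) 1 ×ˢ Ioo (1/4 : ℝ) (3/4)) :=
    measurableSet_Ioo.prod measurableSet_Ioo
  have hm' : MeasurableSet (Ioo (0 : ℝ) (1/2) ×ˢ Ioo (3/4 : ℝ) 1) :=
    measurableSet_Ioo.prod measurableSet_Ioo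
  have hleft : Disjoint (Ioo (0 : ℝ) (1/2)) (Ioo (1/2) 1) := Ioo_disjoint_Ioo.2 (by norm_num)
  have hd₁₂ : Disjoint (Ioo (0 : ℝ) (1/2) ×ˢ Ioo (0 : ℝ) (1/4))
      (Ioo (0 : ℝ) (1/2) ×ˢ Ioo (3/4 : ℝ) 1) :=
    disjoint_prod.2 (Or.inr (Ioo_disjoint_Ioo.2 (by norm_num)))
  have hd₃ : Disjoint (Ioo (0 : ℝ) (1/2) ×ˢ Ioo (0 : ℝ) (1/4) ∪ Ioo (0 : ℝ) (1/2) ×ˢ Ioo (3/4 : ℝ) 1)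
      (Ioo (1/2 : ℝ) 1 ×ˢ Ioo (1/4 : ℝ) (3/4)) :=
    (disjoint_prod.2 (Or.inl hleft)).union_left (disjoint_prod.2 (Or.inl hleft))
  have hi := hF.integrableOn_Ioo_prod_Ioo
  rw [exMeasure, integral_smul_measure, exSupport, setIntegral_union hd₃ hm
    ((hi _ _ _ _).union (hi _ _ _ _)) (hi _ _ _ _), setIntegral_union hd₁₂ hm' (hi _ _ _ _) (hi _ _ _ _)]
  norm_num

lemma integral_exMeasure_mul {f g : ℝ → ℝ} (hf : Continuous f) (hg : Continuous g) :
    ∫ p, f p.1 * g p.2 ∂exMeasure =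
      2 * ((∫ x in 0..1/2, f x) * (∫ y in 0..1/4, g y) +
        (∫ x in 0..1/2, f x) * (∫ y in 3/4..1, g y) +
        (∫ x in 1/2..1, f x) * ∫ y in 1/4..3/4, g y) := by
  rw [integral_exMeasure (F := fun p => f p.1 * g p.2) (by fun_prop)]
  simp only [setIntegral_Ioo_prod_Ioo_mul f g (by norm_num : (0 : ℝ) ≤ 1/2),
    setIntegral_Ioo_prod_Ioo_mul f g (by norm_num : (1/2 : ℝ) ≤ 1), (by norm_num : (0 : ℝ) ≤ 1/4),
    (by norm_num : (3/4 : ℝ) ≤ 1), (by norm_num : (1/4 : ℝ) ≤ 3/4)]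

/-- For `(U,V)` uniform (density 2) on `S`, with `X = U` and `Z = V²`:
`E(X) = 1/2`, `E(Z) = 1/3`, `E(XZ) = 29/192`, and `Cov(X,Z) = -1/64 < 0`. -/
theorem stmt18 :
    (∫ p : ℝ × ℝ, p.1 ∂exMeasure) = 1/2 ∧
    (∫ p : ℝ × ℝ, (p.2)^2 ∂exMeasure) = 1/3 ∧
    (∫ p : ℝ × ℝ, p.1 * (p.2)^2 ∂exMeasure) = 29/192 ∧
    (∫ p : ℝ × ℝ, p.1 * (p.2)^2 ∂exMeasure) -
      (∫ p : ℝ × ℝ, p.1 ∂exMeasure) * (∫ p : ℝ × ℝ, (p.2)^2 ∂exMeasure) = -(1/64) ∧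
    (-(1/64) : ℝ) < 0 := by
  have hX : ∫ p : ℝ × ℝ, p.1 ∂exMeasure = 1/2 := by
    have h := integral_exMeasure_mul (f := fun x => x) (g := fun _ => 1) continuous_id
      continuous_const
    simp only [mul_one] at h
    rw [h]
    norm_num
  have hZ : ∫ p : ℝ × ℝ, (p.2)^2 ∂exMeasure = 1/3 := by
    have h := integral_exMeasure_mul (f := fun _ => 1) (g := (· ^ 2)) continuous_const
      (continuous_pow 2)
    simp only [one_mul] at h
    rw [h]
    norm_num [integral_pow]
  have hXZ : ∫ p : ℝ × ℝ, p.1 * (p.2)^2 ∂exMeasure = 29/192 := by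
    refine (integral_exMeasure_mul (f := fun x => x) (g := (· ^ 2)) continuous_id
      (continuous_pow 2)).trans ?_
    norm_num [integral_pow]
  refine ⟨hX, hZ, hXZ, ?_, by norm_num⟩
  rw [hX, hZ, hXZ]
  norm_num
end
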